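/- Let A_Γ be a large-type free-of-infinity Artin group of rank at least 3, let g ∈ A_Γ and a ∈ V. If a type-2 vertex h·A_{bc} contains the type-1 vertex g·⟨a⟩ (as subsets of A_Γ), then a ∈ {b, c} and h·A_{bc} = g·A_{bc}. Consequently, the type-2 vertices adjacent to g·⟨a⟩ in the essential 1-skeleton are exactly the cosets g·A_{ab'} for b' ∈ V with b' ≠ a (so the star of g·⟨a⟩ is the g-translate of the star of ⟨a⟩ in Γ_bar, an n-pod), and each such type-2 vertex lies in Fix(g·⟨a⟩·g⁻¹). -/

import Mathlib

open scoped Pointwise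

section ArtinDefs

variable {V : Type}

/-- The alternating word `aba⋯` of length `n` in the free group on `V`. -/
def braidWord (n : ℕ) (a b : V) : FreeGroup V :=
  ((List.range n).map (fun i => FreeGroup.of (if i % 2 = 0 then a else b))).prod

/-- The braid relators: for each pair of distinct `a b`, the relator equating the two
alternating products `aba⋯` and `bab⋯`, both of length `m a b`. -/
def artinRels (m : V → V → ℕ) : Set (FreeGroup V) :=
  { r | ∃ a b : V, a ≠ b ∧ r = braidWord (m a b) a b * (braidWord (m a b) b a)⁻¹ }

/-- The Artin group of the labelled graph `(V, m)`. -/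
abbrev Artin (m : V → V → ℕ) : Type := PresentedGroup (artinRels m)

/-- The standard generators of the Artin group. -/
def gen (m : V → V → ℕ) (a : V) : Artin m := PresentedGroup.of a

/-- The standard dihedral parabolic subgroup `A_{ab}`. -/
def Aab (m : V → V → ℕ) (a b : V) : Subgroup (Artin m) :=
  Subgroup.closure {gen m a, gen m b}

/-- The standard cyclic parabolic subgroup `⟨a⟩`. -/
def cyc (m : V → V → ℕ) (a : V) : Subgroup (Artin m) :=
  Subgroup.closure {gen m a}

/-- The conjugate `g H g⁻¹` of a subgroup `H`. -/
def conjSub {m : V → V → ℕ} (g : Artin m) (H : Subgroup (Artin m)) : Subgroup (Artin m) :=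
  Subgroup.map (MulAut.conj g).toMonoidHom H

/-- Type-2 parabolic subgroups: the conjugates `g·A_{ab}·g⁻¹` with `a ≠ b`. -/
def isParab2 (m : V → V → ℕ) (H : Subgroup (Artin m)) : Prop :=
  ∃ (g : Artin m) (a b : V), a ≠ b ∧ H = conjSub g (Aab m a b)

/-- Type-1 parabolic subgroups: the conjugates `g·⟨a⟩·g⁻¹`. -/
def isParab1 (m : V → V → ℕ) (H : Subgroup (Artin m)) : Prop :=
  ∃ (g : Artin m) (a : V), H = conjSub g (cyc m a)

/-- Type-2 vertices: the left cosets `g·A_{ab}` with `a ≠ b`, regarded as subsets. -/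
def isVertex2 (m : V → V → ℕ) (C : Set (Artin m)) : Prop :=
  ∃ (g : Artin m) (a b : V), a ≠ b ∧ C = g • (Aab m a b : Set (Artin m))

/-- Type-1 vertices: the left cosets `g·⟨a⟩`, regarded as subsets. -/
def isVertex1 (m : V → V → ℕ) (C : Set (Artin m)) : Prop :=
  ∃ (g : Artin m) (a : V), C = g • (cyc m a : Set (Artin m))

/-- `Fix H`: the set of (type-1 or type-2) vertices fixed setwise by every element of `H`. -/
def fixedVerts (m : V → V → ℕ) (H : Subgroup (Artin m)) : Set (Set (Artin m)) :=
  {C | (isVertex1 m C ∨ isVertex2 m C) ∧ ∀ h ∈ H, h • C = C}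

/-- The vertex set of the essential 1-skeleton: type-1 and type-2 vertices. -/
abbrev Vert (m : V → V → ℕ) : Type := {C : Set (Artin m) // isVertex1 m C ∨ isVertex2 m C}

/-- The essential 1-skeleton `X_Γ^{(1)-ess}`: a type-1 vertex `x` is adjacent to a
type-2 vertex `v` exactly when `x ⊆ v`. -/
def Xess (m : V → V → ℕ) : SimpleGraph (Vert m) where
  Adj x v := x ≠ v ∧
    ((isVertex1 m ↑x ∧ isVertex2 m ↑v ∧ (x : Set (Artin m)) ⊆ ↑v) ∨
     (isVertex1 m ↑v ∧ isVertex2 m ↑x ∧ (v : Set (Artin m)) ⊆ ↑x))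
  symm := ⟨fun _ _ h => ⟨h.1.symm, h.2.symm⟩⟩
  loopless := ⟨fun _ h => h.1 rfl⟩

/-- The group `Aut(Γ)` of label-preserving permutations of `V`. -/
def AutGamma (m : V → V → ℕ) : Subgroup (Equiv.Perm V) where
  carrier := {σ | ∀ a b, m (σ a) (σ b) = m a b}
  one_mem' := fun a b => rfl
  mul_mem' := by
    intro σ τ hσ hτ a b
    simpa using (hσ (τ a) (τ b)).trans (hτ a b)
  inv_mem' := by
    intro σ hσ a b
    simpa using (hσ (σ⁻¹ a) (σ⁻¹ b)).symm

end ArtinDefs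



namespace ArtinProof

variable {V : Type}

noncomputable section
open Real

variable [Fintype V] [DecidableEq V] (m : V → V → ℕ)

/-- The "Gram matrix" entries. -/
def K (u w : V) : ℝ := if w = u then 1 else -Real.cos (π / m u w)

/-- inner product of `x` with the basis vector at `u`. -/
def ip (u : V) (x : V → ℝ) : ℝ := ∑ w, x w * K m u w

def δ (u : V) : V → ℝ := Pi.single u 1

lemma ip_delta (u w : V) : ip m u (δ w) = K m u w := by
  unfold ip δ
  rw [Finset.sum_eq_single w]
  · simp
  · intro b _ hb; simp [Pi.single_apply, hb]
  · intro h; exact absurd (Finset.mem_univ w) h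

lemma ip_add (u : V) (x y : V → ℝ) : ip m u (x + y) = ip m u x + ip m u y := by
  unfold ip; rw [← Finset.sum_add_distrib]; congr 1; ext w; simp [add_mul]

lemma ip_smul (u : V) (r : ℝ) (x : V → ℝ) : ip m u (r • x) = r * ip m u x := by
  unfold ip; rw [Finset.mul_sum]; congr 1; ext w; simp; ring

/-- the reflection map -/
def σ (u : V) (x : V → ℝ) : V → ℝ := x - (2 * ip m u x) • δ u

lemma ip_sigma (u : V) (x : V → ℝ) : ip m u (σ m u x) = -(ip m u x) := by
  unfold σ
  rw [sub_eq_add_neg, ip_add, ← neg_smul, ip_smul, ip_delta]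
  have : K m u u = 1 := by unfold K; simp
  rw [this]; ring

lemma sigma_invol (u : V) (x : V → ℝ) : σ m u (σ m u x) = x := by
  have h := ip_sigma m u x
  unfold σ at h ⊢
  rw [h]
  ext w
  simp [δ, Pi.single_apply]

lemma sigma_add (u : V) (x y : V → ℝ) : σ m u (x + y) = σ m u x + σ m u y := by
  unfold σ; rw [ip_add]; ext w; simp; ring

lemma sigma_smul (u : V) (r : ℝ) (x : V → ℝ) : σ m u (r • x) = r • σ m u x := by
  unfold σ; rw [ip_smul]; ext w; simp; ring

lemma sigma_fixes (u : V) (x : V → ℝ) (h : ip m u x = 0) : σ m u x = x := by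
  unfold σ; rw [h]; simp

end

end ArtinProof

namespace ArtinProof

noncomputable section
open Real

variable [Fintype V] [DecidableEq V] (m : V → V → ℕ)

variable (u v : V)

/-- plane vector -/
def P (α β : ℝ) : V → ℝ := α • δ u + β • δ v

variable {m u v}

section plane

lemma Kuv (huv : u ≠ v) : K m u v = -Real.cos (π / m u v) := by
  unfold K; rw [if_neg (Ne.symm huv)]

lemma Kvu (huv : u ≠ v) (hsym : m u v = m v u) : K m v u = -Real.cos (π / m u v) := by
  unfold K; rw [if_neg huv, hsym]

lemma Kuu : K m u u = 1 := by unfold K; simp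

lemma ip_P (huv : u ≠ v) (hsym : m u v = m v u) (α β : ℝ) :
    ip m u (P u v α β) = α - Real.cos (π / m u v) * β ∧
    ip m v (P u v α β) = -(Real.cos (π / m u v)) * α + β := by
  unfold P
  constructor
  · rw [ip_add, ip_smul, ip_smul, ip_delta, ip_delta, Kuu, Kuv huv]; ring
  · rw [ip_add, ip_smul, ip_smul, ip_delta, ip_delta, Kuu, Kvu huv hsym]; ring

lemma sigma_v_P (huv : u ≠ v) (hsym : m u v = m v u) (α β : ℝ) :
    σ m v (P u v α β) = P u v α (2 * Real.cos (π / m u v) * α - β) := by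
  unfold σ
  rw [(ip_P huv hsym α β).2]
  unfold P δ
  ext w
  simp [Pi.single_apply]
  split_ifs <;> ring

lemma sigma_u_P (huv : u ≠ v) (hsym : m u v = m v u) (α β : ℝ) :
    σ m u (P u v α β) = P u v (2 * Real.cos (π / m u v) * β - α) β := by
  unfold σ
  rw [(ip_P huv hsym α β).1]
  unfold P δ
  ext w
  simp [Pi.single_apply]
  split_ifs <;> ring

lemma g_P (huv : u ≠ v) (hsym : m u v = m v u) (α β : ℝ) :
    σ m u (σ m v (P u v α β)) =
      P u v (2 * Real.cos (π / m u v) * (2 * Real.cos (π / m u v) * α - β) - α)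
        (2 * Real.cos (π / m u v) * α - β) := by
  rw [sigma_v_P huv hsym, sigma_u_P huv hsym]

lemma P_ext {α β α' β' : ℝ} (h1 : α = α') (h2 : β = β') : P u v α β = P u v α' β' := by
  rw [h1, h2]

/-- the key trig identity -/
lemma trig_step (θ y : ℝ) : Real.sin (y + θ) = 2 * Real.cos θ * Real.sin y - Real.sin (y - θ) := by
  rw [Real.sin_add, Real.sin_sub]; ring

lemma iterate_P (huv : u ≠ v) (hsym : m u v = m v u) (α β : ℝ) : ∀ k : ℕ,
    Real.sin (π / m u v) • (fun x => σ m u (σ m v x))^[k] (P u v α β) =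
      P u v (α * Real.sin ((2 * k + 1) * (π / m u v)) - β * Real.sin (2 * k * (π / m u v)))
        (α * Real.sin (2 * k * (π / m u v)) - β * Real.sin ((2 * k - 1) * (π / m u v))) := by
  set θ := π / m u v with hθ
  intro k
  induction k with
  | zero =>
      simp only [Function.iterate_zero, id_eq, Nat.cast_zero]
      rw [show ((2:ℝ) * 0 + 1) * θ = θ by ring, show (2:ℝ) * 0 * θ = 0 by ring,
        show ((2:ℝ) * 0 - 1) * θ = -θ by ring]
      unfold P
      rw [Real.sin_zero, Real.sin_neg, smul_add, smul_smul, smul_smul]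
      ring_nf
  | succ k ih =>
      rw [Function.iterate_succ_apply', ← sigma_smul, ← sigma_smul, ih,
        g_P huv hsym]
      rw [← hθ]
      have t1 := trig_step θ ((2*(k:ℝ)+2)*θ)
      have t2 := trig_step θ ((2*(k:ℝ)+1)*θ)
      have t3 := trig_step θ ((2*(k:ℝ))*θ)
      refine P_ext ?_ ?_
      · push_cast
        linear_combination (norm := ring_nf)
          (-α) * t1 + (β - 2*Real.cos θ*α) * t2 + (2*Real.cos θ*β) * t3
      · push_cast
        linear_combination (norm := ring_nf) (-α) * t2 + β * t3

end plane

end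

end ArtinProof

namespace ArtinProof

noncomputable section
open Real

variable [Fintype V] [DecidableEq V] {m : V → V → ℕ} {u v : V}

lemma ip_sub (w : V) (x y : V → ℝ) : ip m w (x - y) = ip m w x - ip m w y := by
  unfold ip; rw [← Finset.sum_sub_distrib]; congr 1; ext z; simp; ring

lemma g_iter_add (n : ℕ) (x y : V → ℝ) :
    (fun x => σ m u (σ m v x))^[n] (x + y) =
      (fun x => σ m u (σ m v x))^[n] x + (fun x => σ m u (σ m v x))^[n] y := by
  induction n with
  | zero => simp
  | succ n ih => rw [Function.iterate_succ_apply', ih, Function.iterate_succ_apply',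
      Function.iterate_succ_apply', sigma_add, sigma_add]

lemma smul_P (r α β : ℝ) : r • P u v α β = P u v (r*α) (r*β) := by
  unfold P; rw [smul_add, smul_smul, smul_smul]

lemma braid_pow (huv : u ≠ v) (hsym : m u v = m v u) (hm : 3 ≤ m u v) (x : V → ℝ) :
    (fun x => σ m u (σ m v x))^[m u v] x = x := by
  set n := m u v with hn
  set θ := π / n with hθ
  set c := Real.cos θ with hc
  have hn0 : (n : ℝ) ≠ 0 := by
    have : (3:ℝ) ≤ n := by exact_mod_cast hm
    linarith
  have hθpos : 0 < θ := by
    rw [hθ]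
    apply div_pos Real.pi_pos
    have : (3:ℝ) ≤ n := by exact_mod_cast hm
    linarith
  have hθlt : θ < π := by
    rw [hθ]
    apply div_lt_self Real.pi_pos
    have : (3:ℝ) ≤ n := by exact_mod_cast hm
    linarith
  have hs : Real.sin θ ≠ 0 := ne_of_gt (Real.sin_pos_of_pos_of_lt_pi hθpos hθlt)
  have h1c : 1 - c^2 ≠ 0 := by
    have h := Real.sin_sq_add_cos_sq θ
    have : 1 - c^2 = Real.sin θ ^ 2 := by rw [hc]; linarith
    rw [this]
    exact pow_ne_zero 2 hs
  set iu := ip m u x with hiu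
  set iv := ip m v x with hiv
  set α := (iu + c*iv)/(1-c^2) with hα
  set β := (c*iu + iv)/(1-c^2) with hβ
  set q := x - P u v α β with hq
  have hPu := (ip_P huv hsym α β).1
  have hPv := (ip_P huv hsym α β).2
  have hqu : ip m u q = 0 := by
    rw [hq, ip_sub, hPu, ← hiu, hα, hβ]
    field_simp
    ring
  have hqv : ip m v q = 0 := by
    rw [hq, ip_sub, hPv, ← hiv, hα, hβ]
    field_simp
    ring
  have hgq : (fun x => σ m u (σ m v x)) q = q := by
    simp only []
    rw [sigma_fixes m v q hqv, sigma_fixes m u q hqu]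
  have hiterq : (fun x => σ m u (σ m v x))^[n] q = q := Function.iterate_fixed (f := fun x => σ m u (σ m v x)) hgq n
  have hiterP : (fun x => σ m u (σ m v x))^[n] (P u v α β) = P u v α β := by
    have h := iterate_P huv hsym α β n
    have e0 : (2 * (n:ℝ)) * θ = 2 * π := by
      rw [hθ]; field_simp
    have e1 : ((2 * (n:ℝ)) + 1) * θ = θ + 2 * π := by
      rw [hθ]; field_simp; ring
    have e2 : ((2 * (n:ℝ)) - 1) * θ = -θ + 2 * π := by
      rw [hθ]; field_simp; ring
    rw [show (2 * (n:ℝ) + 1) * θ = ((2 * (n:ℝ)) + 1) * θ by ring, e1,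
      show (2 * (n:ℝ)) * θ = 2 * π from e0, e2,
      Real.sin_add_two_pi, Real.sin_add_two_pi, Real.sin_two_pi, Real.sin_neg] at h
    have h2 : Real.sin θ • (fun x => σ m u (σ m v x))^[n] (P u v α β) =
        Real.sin θ • P u v α β := by
      rw [h, smul_P]
      apply P_ext <;> ring
    exact smul_right_injective (V → ℝ) hs h2
  have hx : x = q + P u v α β := by rw [hq]; abel
  calc (fun x => σ m u (σ m v x))^[n] x
      = (fun x => σ m u (σ m v x))^[n] (q + P u v α β) := by rw [← hx]
    _ = (fun x => σ m u (σ m v x))^[n] q + (fun x => σ m u (σ m v x))^[n] (P u v α β) :=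
        g_iter_add n q (P u v α β)
    _ = q + P u v α β := by rw [hiterq, hiterP]
    _ = x := hx.symm

end

end ArtinProof

namespace ArtinProof

section GroupLemma

variable {G : Type*} [Group G]

def altprod (n : ℕ) (x y : G) : G :=
  ((List.range n).map (fun i => if i % 2 = 0 then x else y)).prod

lemma altprod_succ (n : ℕ) (x y : G) :
    altprod (n+1) x y = altprod n x y * (if n % 2 = 0 then x else y) := by
  unfold altprod
  rw [List.range_succ, List.map_append, List.prod_append]
  simp

lemma altprod_closed (x y : G) : ∀ n,
    altprod n x y = (x*y)^(n/2) * (if n % 2 = 0 then 1 else x) := by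
  intro n
  induction n with
  | zero => simp [altprod]
  | succ n ih =>
      rcases Nat.even_or_odd n with he | ho
      · have h2 : n % 2 = 0 := Nat.even_iff.mp he
        have h3 : (n+1) % 2 = 1 := by omega
        have h4 : (n+1)/2 = n/2 := by omega
        rw [altprod_succ, ih, h2, h3, h4]
        simp
      · have h2 : n % 2 = 1 := Nat.odd_iff.mp ho
        have h3 : (n+1) % 2 = 0 := by omega
        have h4 : (n+1)/2 = n/2 + 1 := by omega
        rw [altprod_succ, ih, h2, h3, h4]
        simp [pow_succ, mul_assoc]

lemma braid_of_inv_pow (x y : G) (hx : x*x = 1) (hy : y*y = 1) {n : ℕ}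
    (h : (x*y)^n = 1) : altprod n x y = altprod n y x := by
  have hxi : x⁻¹ = x := inv_eq_of_mul_eq_one_right hx
  have hyi : y⁻¹ = y := inv_eq_of_mul_eq_one_right hy
  have hyx : y * x = (x*y)⁻¹ := by rw [mul_inv_rev, hxi, hyi]
  rw [altprod_closed x y n, altprod_closed y x n]
  rcases Nat.even_or_odd n with he | ho
  · obtain ⟨k, hk⟩ := he
    have h2 : n % 2 = 0 := Nat.even_iff.mp (hk ▸ ⟨k, rfl⟩)
    have h4 : n / 2 = k := by omega
    rw [h2, h4] at *
    simp only [reduceIte, mul_one]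
    rw [hyx, inv_pow]
    have : (x*y)^k * (x*y)^k = 1 := by
      rw [← pow_add]
      have : k + k = n := by omega
      rw [this, h]
    exact (inv_eq_of_mul_eq_one_right this).symm
  · obtain ⟨k, hk⟩ := ho
    have h2 : n % 2 = 1 := Nat.odd_iff.mp ⟨k, hk⟩
    have h4 : n / 2 = k := by omega
    rw [h2, h4]
    simp only [if_neg one_ne_zero]
    rw [hyx, inv_pow]
    have h2k : (x*y)^(2*k) = (x*y)⁻¹ := by
      have : (x*y)^(2*k) * (x*y) = 1 := by
        rw [← pow_succ, show 2*k+1 = n by omega, h]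
      exact eq_inv_of_mul_eq_one_left this
    have key : (x*y)^k * ((x*y)^k * x) = y := by
      rw [← mul_assoc, ← pow_add, show k + k = 2*k by ring, h2k, hyx.symm,
        mul_assoc, hx, mul_one]
    calc (x*y)^k * x = ((x*y)^k)⁻¹ * ((x*y)^k * ((x*y)^k * x)) := by group
      _ = ((x*y)^k)⁻¹ * y := by rw [key]

end GroupLemma

end ArtinProof


namespace ArtinProof

noncomputable section
open Real

variable [Fintype V] [DecidableEq V] (m : V → V → ℕ)

/-- The reflection as a permutation of `V → ℝ`. -/
def reflPerm (u : V) : Equiv.Perm (V → ℝ) :=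
  Function.Involutive.toPerm (σ m u) (sigma_invol m u)

lemma reflPerm_apply (u : V) (x : V → ℝ) : reflPerm m u x = σ m u x := rfl

lemma reflPerm_sq (u : V) : reflPerm m u * reflPerm m u = 1 := by
  ext x
  simp [reflPerm_apply, sigma_invol]

lemma reflPerm_braid {u v : V} (huv : u ≠ v) (hsym : m u v = m v u) (hm : 3 ≤ m u v) :
    (reflPerm m u * reflPerm m v) ^ (m u v) = 1 := by
  refine Equiv.ext fun x => ?_
  have h1 : ((reflPerm m u * reflPerm m v) ^ (m u v)) x =
      (fun x => σ m u (σ m v x))^[m u v] x := by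
    rw [← Equiv.Perm.iterate_eq_pow]
    rfl
  exact h1.trans (braid_pow huv hsym hm x)

/-- The representation of the Artin group. -/
def rep (hsymm : ∀ a b : V, m a b = m b a) (hlarge : ∀ a b : V, a ≠ b → 3 ≤ m a b) :
    Artin m →* Equiv.Perm (V → ℝ) := by
  apply PresentedGroup.toGroup (f := reflPerm m)
  intro r hr
  obtain ⟨a, b, hab, rfl⟩ := hr
  have key : ∀ (a b : V), (FreeGroup.lift (reflPerm m)) (braidWord (m a b) a b) =
      altprod (m a b) (reflPerm m a) (reflPerm m b) := by
    intro a b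
    unfold braidWord altprod
    rw [map_list_prod, List.map_map]
    congr 1
    apply List.map_congr_left
    intro i _
    simp only [Function.comp_apply]
    split_ifs <;> simp
  rw [map_mul, map_inv, key a b]
  have key2 : (FreeGroup.lift (reflPerm m)) (braidWord (m a b) b a) =
      altprod (m a b) (reflPerm m b) (reflPerm m a) := by
    have := key b a
    rw [hsymm b a] at this
    exact this
  rw [key2]
  rw [braid_of_inv_pow (reflPerm m a) (reflPerm m b) (reflPerm_sq m a) (reflPerm_sq m b)
    (reflPerm_braid m hab (hsymm a b) (hlarge a b hab))]
  simp

lemma rep_gen (hsymm : ∀ a b : V, m a b = m b a) (hlarge : ∀ a b : V, a ≠ b → 3 ≤ m a b)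
    (a : V) : rep m hsymm hlarge (gen m a) = reflPerm m a :=
  PresentedGroup.toGroup.of _

/-- the subgroup of permutations preserving the `a`-coordinate -/
def coordStab (a : V) : Subgroup (Equiv.Perm (V → ℝ)) where
  carrier := {T | ∀ x : V → ℝ, T x a = x a}
  one_mem' := fun _ => rfl
  mul_mem' := by
    intro T S hT hS x
    have : (T * S) x = T (S x) := rfl
    rw [this, hT (S x), hS x]
  inv_mem' := by
    intro T hT x
    have := hT (T⁻¹ x)
    rw [show T (T⁻¹ x) = x from T.apply_symm_apply x] at this
    exact this.symm

lemma reflPerm_mem_coordStab {a b : V} (hba : b ≠ a) : reflPerm m b ∈ coordStab a := by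
  intro x
  rw [reflPerm_apply]
  unfold σ δ
  simp [Pi.single_apply, hba]

/-- The crucial lemma: a generator lies in a dihedral standard parabolic only if it is
one of the two letters. -/
lemma gen_not_mem (hsymm : ∀ a b : V, m a b = m b a) (hlarge : ∀ a b : V, a ≠ b → 3 ≤ m a b)
    {a b c : V} (hab : a ≠ b) (hac : a ≠ c) : gen m a ∉ Aab m b c := by
  intro hmem
  have himg : rep m hsymm hlarge (gen m a) ∈ Subgroup.map (rep m hsymm hlarge) (Aab m b c) :=
    Subgroup.mem_map_of_mem _ hmem
  have hsub : Subgroup.map (rep m hsymm hlarge) (Aab m b c) ≤ coordStab a := by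
    unfold Aab
    rw [MonoidHom.map_closure]
    apply Subgroup.closure_le _ |>.mpr
    intro T hT
    simp only [Set.image_insert_eq, Set.image_singleton, Set.mem_insert_iff,
      Set.mem_singleton_iff] at hT
    rcases hT with rfl | rfl
    · rw [rep_gen]; exact reflPerm_mem_coordStab m (Ne.symm hab)
    · rw [rep_gen]; exact reflPerm_mem_coordStab m (Ne.symm hac)
  have hstab : rep m hsymm hlarge (gen m a) ∈ coordStab a := hsub himg
  rw [rep_gen] at hstab
  have hval := hstab (δ b)
  rw [reflPerm_apply] at hval
  have expand : σ m a (δ b) a = δ b a - 2 * ip m a (δ b) * δ a a := rfl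
  rw [expand, ip_delta] at hval
  have h1 : δ b a = 0 := by unfold δ; simp [Pi.single_apply, Ne.symm hab]
  have h2 : δ a a = 1 := by unfold δ; simp
  rw [h1, h2, Kuv hab] at hval
  have h3 : (3:ℝ) ≤ (m a b : ℝ) := by exact_mod_cast hlarge a b hab
  have hπ := Real.pi_pos
  have hd1 : 0 < π / (m a b : ℝ) := div_pos hπ (by linarith)
  have hd2 : π / (m a b : ℝ) ≤ π / 3 := by gcongr <;> linarith
  have hcos : 0 < Real.cos (π / m a b) :=
    Real.cos_pos_of_mem_Ioo ⟨by linarith, by linarith⟩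
  nlinarith [hval]

end

end ArtinProof

namespace ArtinProof

section Cosets

variable {G : Type*} [Group G]

lemma smul_coe_of_mem (H : Subgroup G) {x : G} (hx : x ∈ H) : x • (H : Set G) = H := by
  ext z
  rw [Set.mem_smul_set_iff_inv_smul_mem, smul_eq_mul, SetLike.mem_coe, SetLike.mem_coe]
  exact ⟨fun h => by simpa using H.mul_mem hx h, fun h => H.mul_mem (H.inv_mem hx) h⟩

lemma coset_eq (H : Subgroup G) {g h : G} (hx : h⁻¹ * g ∈ H) :
    h • (H : Set G) = g • (H : Set G) := by
  calc h • (H : Set G) = h • ((h⁻¹ * g) • (H : Set G)) := by rw [smul_coe_of_mem H hx]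
    _ = g • (H : Set G) := by rw [smul_smul]; congr 1; group

end Cosets

lemma Aab_comm {m : V → V → ℕ} (x y : V) : Aab m x y = Aab m y x := by
  unfold Aab; rw [Set.pair_comm]

lemma cyc_le_Aab {m : V → V → ℕ} (a b : V) : cyc m a ≤ Aab m a b := by
  unfold cyc Aab
  apply Subgroup.closure_mono
  intro z hz
  simp only [Set.mem_singleton_iff] at hz
  simp [hz]

end ArtinProof

/-- **Lemma 3.11 (stars of type-1 vertices).** If a type-2 vertex `h·A_{bc}` contains the
type-1 vertex `g·⟨a⟩` then `a ∈ {b, c}` and `h·A_{bc} = g·A_{bc}`; consequently the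
type-2 vertices adjacent to `g·⟨a⟩` are exactly the cosets `g·A_{ab'}` for `b' ≠ a`,
and each of them lies in `Fix(g·⟨a⟩·g⁻¹)`. -/
theorem stmt_10 {V : Type} [Fintype V] (m : V → V → ℕ)
    (hcard : 3 ≤ Fintype.card V)
    (hsymm : ∀ a b : V, m a b = m b a)
    (hlarge : ∀ a b : V, a ≠ b → 3 ≤ m a b) :
    (∀ (g h : Artin m) (a b c : V), b ≠ c →
      g • (cyc m a : Set (Artin m)) ⊆ h • (Aab m b c : Set (Artin m)) →
      (a = b ∨ a = c) ∧
        h • (Aab m b c : Set (Artin m)) = g • (Aab m b c : Set (Artin m))) ∧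
    (∀ (g : Artin m) (a : V) (v : Set (Artin m)), isVertex2 m v →
      (g • (cyc m a : Set (Artin m)) ⊆ v ↔
        ∃ b' : V, b' ≠ a ∧ v = g • (Aab m a b' : Set (Artin m)))) ∧
    (∀ (g : Artin m) (a b' : V), b' ≠ a →
      g • (Aab m a b' : Set (Artin m)) ∈ fixedVerts m (conjSub g (cyc m a))) := by
  classical
  have main1 : ∀ (g h : Artin m) (a b c : V), b ≠ c →
      g • (cyc m a : Set (Artin m)) ⊆ h • (Aab m b c : Set (Artin m)) →
      (a = b ∨ a = c) ∧
        h • (Aab m b c : Set (Artin m)) = g • (Aab m b c : Set (Artin m)) := by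
    intro g h a b c hbc hsub
    have hg : g ∈ h • (Aab m b c : Set (Artin m)) := by
      have h1 : (g : Artin m) ∈ g • (cyc m a : Set (Artin m)) := by
        have h0 : (1 : Artin m) ∈ (cyc m a : Set (Artin m)) := (cyc m a).one_mem
        simpa using Set.smul_mem_smul_set (a := g) h0
      exact hsub h1
    rw [Set.mem_smul_set_iff_inv_smul_mem, smul_eq_mul, SetLike.mem_coe] at hg
    have hcoset := ArtinProof.coset_eq (Aab m b c) hg
    have hgen : gen m a ∈ Aab m b c := by
      have h2 : g * gen m a ∈ g • (cyc m a : Set (Artin m)) := by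
        have h0 : gen m a ∈ (cyc m a : Set (Artin m)) :=
          Subgroup.subset_closure (Set.mem_singleton _)
        simpa using Set.smul_mem_smul_set (a := g) h0
      have h3 := hsub h2
      rw [hcoset, Set.mem_smul_set_iff_inv_smul_mem, smul_eq_mul, inv_mul_cancel_left,
        SetLike.mem_coe] at h3
      exact h3
    refine ⟨?_, hcoset⟩
    by_cases hab : a = b
    · exact Or.inl hab
    by_cases hac : a = c
    · exact Or.inr hac
    exact absurd hgen (ArtinProof.gen_not_mem m hsymm hlarge hab hac)
  refine ⟨main1, ?_, ?_⟩
  · intro g a v hv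
    constructor
    · intro hsub
      obtain ⟨k, b, c, hbc, rfl⟩ := hv
      obtain ⟨hor, heq⟩ := main1 g k a b c hbc hsub
      rcases hor with rfl | rfl
      · exact ⟨c, Ne.symm hbc, heq⟩
      · exact ⟨b, hbc, by rw [heq, ArtinProof.Aab_comm]⟩
    · rintro ⟨b', hb'a, rfl⟩
      apply Set.smul_set_mono
      exact SetLike.coe_subset_coe.mpr (ArtinProof.cyc_le_Aab a b')
  · intro g a b' hb'a
    refine ⟨Or.inr ⟨g, a, b', Ne.symm hb'a, rfl⟩, ?_⟩
    intro h hh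
    obtain ⟨x, hx, rfl⟩ := hh
    have hxA : x ∈ Aab m a b' := ArtinProof.cyc_le_Aab a b' hx
    show (MulAut.conj g) x • g • (Aab m a b' : Set (Artin m)) = g • (Aab m a b' : Set (Artin m))
    rw [smul_smul]
    have hmul : (MulAut.conj g) x * g = g * x := by
      simp [MulAut.conj_apply]
    rw [hmul, ← smul_smul, ArtinProof.smul_coe_of_mem _ hxA]
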